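/- If (X_n) is a sequence of nonzero real Banach spaces, then t(c0(X_n)) = 1. -/
import Mathlib

/-- The thinness index `t(X)` of a normed space. -/
noncomputable def thinness (X : Type*) [NormedAddCommGroup X] : ℝ :=
  sInf {r : ℝ | 0 < r ∧ ∀ (n : ℕ) (x : Fin n → X), (∀ i, ‖x i‖ = 1) →
    ∀ ε : ℝ, 0 < ε → ∃ y : X, ‖y‖ = 1 ∧ ∀ i, ‖x i - y‖ < r + ε}

/-- The `c₀`-sum of a sequence of normed spaces, realized as the closed subspace of the
`ℓ∞`-sum (`lp X ⊤`, with the supremum norm) consisting of those elements whose coordinate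
norms tend to `0`. -/
noncomputable def c0Sum (X : ℕ → Type*) [∀ n, NormedAddCommGroup (X n)] [∀ n, NormedSpace ℝ (X n)] :
    Submodule ℝ (lp X ⊤) where
  carrier := {x | Filter.Tendsto (fun n => ‖x n‖) Filter.atTop (nhds 0)}
  zero_mem' := by
    simp only [Set.mem_setOf_eq, lp.coeFn_zero, Pi.zero_apply, norm_zero]
    exact tendsto_const_nhds
  add_mem' := by
    intro a b ha hb
    have h := ha.add hb
    rw [add_zero] at h
    refine squeeze_zero (fun n => norm_nonneg _) (fun n => ?_) h
    exact norm_add_le _ _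
  smul_mem' := by
    intro c x hx
    have h : Filter.Tendsto (fun n => ‖c‖ * ‖x n‖) Filter.atTop (nhds (‖c‖ * 0)) :=
      hx.const_mul ‖c‖
    rw [mul_zero] at h
    refine h.congr (fun n => ?_)
    simp [norm_smul]

section Aux

variable (X : ℕ → Type*) [∀ n, NormedAddCommGroup (X n)] [∀ n, NormedSpace ℝ (X n)]
  [∀ n, Nontrivial (X n)]

/-- `lp.single` at a coordinate lies in the c₀-sum. -/
lemma single_mem_c0Sum (N : ℕ) (v : X N) : lp.single ⊤ N v ∈ c0Sum X := by
  have h : ∀ᶠ k in Filter.atTop, ‖lp.single (E := X) ⊤ N v k‖ = 0 := by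
    filter_upwards [Filter.eventually_gt_atTop N] with k hk
    rw [lp.single_apply_ne ⊤ N v (ne_of_gt hk)]
    simp
  exact tendsto_const_nhds.congr' (h.mono fun k hk => hk.symm)

lemma norm_single_top (N : ℕ) (v : X N) : ‖lp.single (E := X) ⊤ N v‖ = ‖v‖ := by
  refine le_antisymm (lp.norm_le_of_forall_le (norm_nonneg v) fun k => ?_) ?_
  · rcases eq_or_ne k N with rfl | hk
    · rw [lp.single_apply_self]
    · rw [lp.single_apply_ne ⊤ N v hk]; simpa using norm_nonneg v
  · have := lp.norm_apply_le_norm (E := X) ENNReal.top_ne_zero (lp.single ⊤ N v) N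
    rwa [lp.single_apply_self] at this

/-- A unit vector in the c₀-sum supported at coordinate `N`. -/
lemma exists_unit_single (N : ℕ) :
    ∃ y : c0Sum X, ‖y‖ = 1 ∧ ∀ k, k ≠ N → (y : lp X ⊤) k = 0 := by
  obtain ⟨v, hv⟩ := exists_norm_eq (X N) (zero_le_one)
  refine ⟨⟨lp.single ⊤ N v, single_mem_c0Sum X N v⟩, ?_, fun k hk => ?_⟩
  · show ‖lp.single (E := X) ⊤ N v‖ = 1
    rw [norm_single_top, hv]
  · exact lp.single_apply_ne ⊤ N v hk

end Aux

theorem thinness_c0Sum (X : ℕ → Type*) [∀ n, NormedAddCommGroup (X n)]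
    [∀ n, NormedSpace ℝ (X n)] [∀ n, CompleteSpace (X n)] [∀ n, Nontrivial (X n)] :
    thinness (c0Sum X) = 1 := by
  have h1 : (1 : ℝ) ∈ {r : ℝ | 0 < r ∧ ∀ (n : ℕ) (x : Fin n → c0Sum X), (∀ i, ‖x i‖ = 1) →
      ∀ ε : ℝ, 0 < ε → ∃ y : c0Sum X, ‖y‖ = 1 ∧ ∀ i, ‖x i - y‖ < r + ε} := by
    refine ⟨one_pos, fun n x hx ε hε => ?_⟩
    -- pick N with all coordinates small
    have hev : ∀ᶠ N in Filter.atTop, ∀ i, ‖(x i : lp X ⊤) N‖ < ε := by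
      rw [Filter.eventually_all]
      intro i
      exact ((x i).2).eventually_lt_const hε
    obtain ⟨N, hN⟩ := hev.exists
    obtain ⟨y, hy1, hy0⟩ := exists_unit_single X N
    refine ⟨y, hy1, fun i => ?_⟩
    have hb : ‖x i - y‖ ≤ 1 + ‖(x i : lp X ⊤) N‖ := by
      have : ‖((x i - y : c0Sum X) : lp X ⊤)‖ ≤ 1 + ‖(x i : lp X ⊤) N‖ := by
        refine lp.norm_le_of_forall_le (by positivity) fun k => ?_
        have hco : ((x i - y : c0Sum X) : lp X ⊤) k = (x i : lp X ⊤) k - (y : lp X ⊤) k := by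
          simp
        rw [hco]
        rcases eq_or_ne k N with rfl | hk
        · calc ‖(x i : lp X ⊤) k - (y : lp X ⊤) k‖
              ≤ ‖(x i : lp X ⊤) k‖ + ‖(y : lp X ⊤) k‖ := norm_sub_le _ _
            _ ≤ ‖(x i : lp X ⊤) k‖ + 1 := by
                have := lp.norm_apply_le_norm (E := X) ENNReal.top_ne_zero (y : lp X ⊤) k
                rw [show ‖(y : lp X ⊤)‖ = ‖y‖ from rfl, hy1] at this
                linarith
            _ = 1 + ‖(x i : lp X ⊤) k‖ := by ring
        · rw [hy0 k hk, sub_zero]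
          have := lp.norm_apply_le_norm (E := X) ENNReal.top_ne_zero (x i : lp X ⊤) k
          rw [show ‖((x i : c0Sum X) : lp X ⊤)‖ = ‖x i‖ from rfl, hx i] at this
          have := norm_nonneg ((x i : lp X ⊤) N)
          linarith
      exact this
    calc ‖x i - y‖ ≤ 1 + ‖(x i : lp X ⊤) N‖ := hb
      _ < 1 + ε := by linarith [hN i]
  unfold thinness
  refine le_antisymm (csInf_le ⟨0, fun r hr => le_of_lt hr.1⟩ h1) (le_csInf ⟨1, h1⟩ ?_)
  rintro r ⟨hr0, hr⟩
  by_contra hlt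
  push_neg at hlt
  set ε := (1 - r) / 2 with hεdef
  have hε : 0 < ε := by simp [hεdef]; linarith
  obtain ⟨z, hz1, -⟩ := exists_unit_single X 0
  obtain ⟨y, hy1, hy⟩ := hr 2 ![z, -z] (by
    intro i
    fin_cases i <;> simp [hz1]) ε hε
  have h0 := hy 0
  have h1' := hy 1
  simp only [Matrix.cons_val_zero, Matrix.cons_val_one, Matrix.head_cons] at h0 h1'
  have : ‖z - y‖ + ‖-z - y‖ ≥ 2 := by
    have : ‖(z - y) - (-z - y)‖ ≤ ‖z - y‖ + ‖-z - y‖ := norm_sub_le _ _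
    have h2 : (z - y) - (-z - y) = (2:ℝ) • z := by module
    rw [h2, norm_smul, hz1, mul_one, Real.norm_ofNat] at this
    linarith
  have : r + ε < 1 := by rw [hεdef]; linarith
  linarith
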